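/- Let T be a binary splitting tree over a finite set U with |U| = N, all of whose nodes have depth at most d, and let A* ⊆ U with |A*| = k satisfy 1 ≤ k and d ≥ ⌈log₂ k⌉. Run the hierarchical search over T with the exact pruning oracle: a node A is pruned if and only if A ∩ A* = ∅. Then every node at which the oracle is evaluated is either the root or a child of a node whose label intersects A*, and the total number of oracle evaluations is at most 1 + 2·Σ_{i=0}^{d} min(2^i, k), hence at most 1 + 2·(2k + k·(d + 1 − ⌈log₂ k⌉)). -/
import Mathlib


/-- A binary splitting tree over a finite set: leaves are singletons and every
internal node's label is partitioned by the labels of its two nonempty children. -/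
inductive BST (α : Type) [DecidableEq α] : Finset α → Type where
  | leaf (j : α) : BST α {j}
  | node (A₁ A₂ : Finset α) (h₁ : A₁.Nonempty) (h₂ : A₂.Nonempty)
      (hd : Disjoint A₁ A₂) (t₁ : BST α A₁) (t₂ : BST α A₂) : BST α (A₁ ∪ A₂)

namespace BST

variable {α : Type} [DecidableEq α]

/-- The height of the tree: every node has depth at most `height`. -/
def height : {A : Finset α} → BST α A → ℕ
  | _, .leaf _ => 0
  | _, .node _ _ _ _ _ t₁ t₂ => max t₁.height t₂.height + 1

/-- The number of evaluations of the pruning predicate performed by the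
hierarchical search with pruning predicate `prune`. -/
def evalCount (prune : Finset α → Bool) : {A : Finset α} → BST α A → ℕ
  | _, .leaf _ => 1
  | _, .node A₁ A₂ _ _ _ t₁ t₂ =>
      if prune (A₁ ∪ A₂) then 1 else 1 + t₁.evalCount prune + t₂.evalCount prune

/-- The labels of the nodes at which the pruning predicate is evaluated by the
hierarchical search with pruning predicate `prune`. -/
def evaluated (prune : Finset α → Bool) : {A : Finset α} → BST α A → Finset (Finset α)
  | _, .leaf j => {{j}}
  | _, .node A₁ A₂ _ _ _ t₁ t₂ =>
      if prune (A₁ ∪ A₂) then {A₁ ∪ A₂}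
      else insert (A₁ ∪ A₂) (t₁.evaluated prune ∪ t₂.evaluated prune)

/-- Pairs `(A, B)` such that the node labeled `B` is a child of the node
labeled `A` in the tree. -/
def childPairs : {A : Finset α} → BST α A → Finset (Finset α × Finset α)
  | _, .leaf _ => ∅
  | _, .node A₁ A₂ _ _ _ t₁ t₂ =>
      insert (A₁ ∪ A₂, A₁) (insert (A₁ ∪ A₂, A₂) (t₁.childPairs ∪ t₂.childPairs))

end BST

namespace BST

variable {α : Type} [DecidableEq α]

lemma evaluated_structure (prune : Finset α → Bool) :
    ∀ {A : Finset α} (t : BST α A), ∀ B ∈ t.evaluated prune,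
      B = A ∨ ∃ P, (P, B) ∈ t.childPairs ∧ prune P = false := by
  intro A t
  induction t with
  | leaf j =>
    intro B hB
    simp only [evaluated, Finset.mem_singleton] at hB
    exact Or.inl hB
  | node A₁ A₂ h₁ h₂ hdis t₁ t₂ ih₁ ih₂ =>
    intro B hB
    simp only [evaluated] at hB
    by_cases hp : prune (A₁ ∪ A₂) = true
    · rw [if_pos hp] at hB
      exact Or.inl (Finset.mem_singleton.mp hB)
    · have hp' : prune (A₁ ∪ A₂) = false := by simpa using hp
      rw [if_neg hp] at hB
      rcases Finset.mem_insert.mp hB with h | h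
      · exact Or.inl h
      · have hmem : ∀ Q ∈ t₁.childPairs ∪ t₂.childPairs,
            Q ∈ (node A₁ A₂ h₁ h₂ hdis t₁ t₂).childPairs := by
          intro Q hQ
          exact Finset.mem_insert_of_mem (Finset.mem_insert_of_mem hQ)
        have hpair₁ : ((A₁ ∪ A₂, A₁) : Finset α × Finset α)
            ∈ (node A₁ A₂ h₁ h₂ hdis t₁ t₂).childPairs := Finset.mem_insert_self _ _
        have hpair₂ : ((A₁ ∪ A₂, A₂) : Finset α × Finset α)
            ∈ (node A₁ A₂ h₁ h₂ hdis t₁ t₂).childPairs :=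
          Finset.mem_insert_of_mem (Finset.mem_insert_self _ _)
        rcases Finset.mem_union.mp h with h | h
        · rcases ih₁ B h with hB1 | ⟨P, hP, hPf⟩
          · subst hB1
            exact Or.inr ⟨_, hpair₁, hp'⟩
          · exact Or.inr ⟨P, hmem _ (Finset.mem_union.mpr (Or.inl hP)), hPf⟩
        · rcases ih₂ B h with hB2 | ⟨P, hP, hPf⟩
          · subst hB2
            exact Or.inr ⟨_, hpair₂, hp'⟩
          · exact Or.inr ⟨P, hmem _ (Finset.mem_union.mpr (Or.inr hP)), hPf⟩

lemma evalCount_le (prune : Finset α → Bool) (Astar : Finset α)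
    (hprune : ∀ A : Finset α, prune A = true ↔ A ∩ Astar = ∅) :
    ∀ {A : Finset α} (t : BST α A) (h' : ℕ), t.height ≤ h' →
      t.evalCount prune ≤ 1 + 2 * ∑ i ∈ Finset.range h', min (2 ^ i) ((A ∩ Astar).card) := by
  intro A t
  induction t with
  | leaf j => intro h' _; simp only [evalCount]; omega
  | node A₁ A₂ h₁ h₂ hdis t₁ t₂ ih₁ ih₂ =>
    intro h' hh
    by_cases hp : prune (A₁ ∪ A₂) = true
    · simp only [evalCount, if_pos hp]; omega
    · obtain ⟨n, rfl⟩ : ∃ n, h' = n + 1 := by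
        cases h' with
        | zero => simp [height] at hh
        | succ n => exact ⟨n, rfl⟩
      have hn₁ : t₁.height ≤ n := by
        have : max t₁.height t₂.height + 1 ≤ n + 1 := hh
        omega
      have hn₂ : t₂.height ≤ n := by
        have : max t₁.height t₂.height + 1 ≤ n + 1 := hh
        omega
      have hne : ((A₁ ∪ A₂) ∩ Astar).Nonempty := by
        rw [Finset.nonempty_iff_ne_empty]
        intro he
        exact hp ((hprune _).mpr he)
      have hcard : ((A₁ ∪ A₂) ∩ Astar).card = (A₁ ∩ Astar).card + (A₂ ∩ Astar).card := by
        rw [Finset.union_inter_distrib_right, Finset.card_union_of_disjoint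
          (hdis.mono Finset.inter_subset_left Finset.inter_subset_left)]
      set m₁ := (A₁ ∩ Astar).card
      set m₂ := (A₂ ∩ Astar).card
      have hm : 1 ≤ m₁ + m₂ := by
        have := Finset.card_pos.mpr hne
        omega
      have b₁ := ih₁ n hn₁
      have b₂ := ih₂ n hn₂
      have hsum : ∑ i ∈ Finset.range n, min (2 ^ i) m₁ + ∑ i ∈ Finset.range n, min (2 ^ i) m₂
          ≤ ∑ i ∈ Finset.range n, min (2 ^ (i + 1)) (m₁ + m₂) := by
        rw [← Finset.sum_add_distrib]
        refine Finset.sum_le_sum fun i _ => ?_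
        have : (2 : ℕ) ^ (i + 1) = 2 ^ i + 2 ^ i := by ring
        omega
      have hrhs : ∑ i ∈ Finset.range (n + 1), min (2 ^ i) (((A₁ ∪ A₂) ∩ Astar).card)
          = ∑ i ∈ Finset.range n, min (2 ^ (i + 1)) (m₁ + m₂) + 1 := by
        rw [Finset.sum_range_succ']
        simp only [pow_zero, hcard]
        have : min 1 (m₁ + m₂) = 1 := by omega
        rw [this]
      simp only [evalCount, if_neg hp]
      rw [hrhs]
      omega

end BST

lemma two_pow_clog_le (k : ℕ) (hk : 1 ≤ k) : 2 ^ Nat.clog 2 k ≤ 2 * k := by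
  rcases eq_or_lt_of_le hk with h | h
  · rw [← h]
    simp [Nat.clog]
  · have hc : 0 < Nat.clog 2 k := Nat.clog_pos (by norm_num) h
    have hlt : 2 ^ (Nat.clog 2 k - 1) < k := by
      have := Nat.pow_pred_clog_lt_self (by norm_num : 1 < 2) h
      simpa [Nat.pred_eq_sub_one] using this
    have : 2 ^ Nat.clog 2 k = 2 * 2 ^ (Nat.clog 2 k - 1) := by
      rw [← pow_succ']
      congr 1
      omega
    omega

lemma sum_two_pow_lt (n : ℕ) : ∑ i ∈ Finset.range n, 2 ^ i < 2 ^ n := by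
  induction n with
  | zero => simp
  | succ n ih =>
    rw [Finset.sum_range_succ, pow_succ]
    omega

lemma sum_min_le (d k : ℕ) (hk : 1 ≤ k) (hdk : Nat.clog 2 k ≤ d) :
    ∑ i ∈ Finset.range (d + 1), min (2 ^ i) k ≤ 2 * k + k * (d + 1 - Nat.clog 2 k) := by
  set c := Nat.clog 2 k with hc
  rw [Finset.range_eq_Ico, ← Finset.sum_Ico_consecutive _ (Nat.zero_le c) (by omega : c ≤ d + 1)]
  have h₁ : ∑ i ∈ Finset.Ico 0 c, min (2 ^ i) k ≤ 2 * k := by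
    calc ∑ i ∈ Finset.Ico 0 c, min (2 ^ i) k ≤ ∑ i ∈ Finset.Ico 0 c, 2 ^ i :=
          Finset.sum_le_sum fun i _ => min_le_left _ _
      _ = ∑ i ∈ Finset.range c, 2 ^ i := by rw [Finset.range_eq_Ico]
      _ ≤ 2 ^ c := (sum_two_pow_lt c).le
      _ ≤ 2 * k := two_pow_clog_le k hk
  have h₂ : ∑ i ∈ Finset.Ico c (d + 1), min (2 ^ i) k ≤ k * (d + 1 - c) := by
    calc ∑ i ∈ Finset.Ico c (d + 1), min (2 ^ i) k ≤ ∑ i ∈ Finset.Ico c (d + 1), k :=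
          Finset.sum_le_sum fun i _ => min_le_right _ _
      _ = (d + 1 - c) * k := by rw [Finset.sum_const, Nat.card_Ico, smul_eq_mul]
      _ = k * (d + 1 - c) := mul_comm _ _
  omega

/-- Let `T` be a binary splitting tree over a finite set `U`
with `|U| = N`, all of whose nodes have depth at most `d`, and let `A* ⊆ U` with
`|A*| = k`, `1 ≤ k`, and `d ≥ ⌈log₂ k⌉`. Run the hierarchical search with the
exact pruning oracle: a node `A` is pruned iff `A ∩ A* = ∅`. Then every node at
which the oracle is evaluated is either the root or a child of a node whose label
intersects `A*`, and the total number of oracle evaluations is at most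
`1 + 2⬝Σ_{i=0}^{d} min (2^i) k`, hence at most
`1 + 2⬝(2k + k⬝(d + 1 − ⌈log₂ k⌉))`. -/
theorem oracle_search_complexity
    {α : Type} [DecidableEq α] {U : Finset α} (N : ℕ) (hN : U.card = N)
    (T : BST α U) (d : ℕ) (hd : T.height ≤ d)
    (Astar : Finset α) (hsub : Astar ⊆ U) (k : ℕ) (hk : Astar.card = k)
    (hk1 : 1 ≤ k) (hdk : Nat.clog 2 k ≤ d)
    (prune : Finset α → Bool)
    (hprune : ∀ A : Finset α, prune A = true ↔ A ∩ Astar = ∅) :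
    (∀ B ∈ T.evaluated prune,
        B = U ∨ ∃ A : Finset α, (A, B) ∈ T.childPairs ∧ (A ∩ Astar).Nonempty) ∧
    T.evalCount prune ≤ 1 + 2 * ∑ i ∈ Finset.range (d + 1), min (2 ^ i) k ∧
    T.evalCount prune ≤ 1 + 2 * (2 * k + k * (d + 1 - Nat.clog 2 k)) := by
  have hUA : U ∩ Astar = Astar := Finset.inter_eq_right.mpr hsub
  have hcount : T.evalCount prune ≤ 1 + 2 * ∑ i ∈ Finset.range (d + 1), min (2 ^ i) k := by
    have := BST.evalCount_le prune Astar hprune T (d + 1) (le_trans hd (Nat.le_succ d))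
    rwa [hUA, hk] at this
  refine ⟨?_, hcount, ?_⟩
  · intro B hB
    rcases BST.evaluated_structure prune T B hB with h | ⟨P, hP, hPf⟩
    · exact Or.inl h
    · refine Or.inr ⟨P, hP, ?_⟩
      rw [Finset.nonempty_iff_ne_empty]
      intro he
      rw [← hprune P] at he
      rw [hPf] at he
      exact Bool.false_ne_true he
  · have := sum_min_le d k hk1 hdk
    omega
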